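/- arXiv:1905.09320 — 2 statements merged into one kernel-verified Lean document; each statement's English description precedes it below -/
import Mathlib

section
/- For α > 0, ∫₀^∞ (r³/2) e^{−r²/2} (1 + e^{−r²/α}(I₁(r²/α) − I₀(r²/α))) dr = 1 − (α/(4+α))^{3/2}, where I₀, I₁ are modified Bessel functions of the first kind. -/
open MeasureTheory Real intervalIntegral

/-- The modified Bessel function of the first kind of order 0,
`I₀(z) = (1/π) ∫₀^π e^{z cos φ} dφ`. -/
noncomputable def besselI0 (z : ℝ) : ℝ :=
  (1 / π) * ∫ φ in (0 : ℝ)..π, Real.exp (z * Real.cos φ)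

/-- The modified Bessel function of the first kind of order 1,
`I₁(z) = (1/π) ∫₀^π e^{z cos φ} cos φ dφ`. -/
noncomputable def besselI1 (z : ℝ) : ℝ :=
  (1 / π) * ∫ φ in (0 : ℝ)..π, Real.exp (z * Real.cos φ) * Real.cos φ

noncomputable def gfun (α r φ : ℝ) : ℝ :=
  r^3/2 * (Real.exp (-(1/2*r^2)) + (Real.cos φ - 1) * Real.exp (-((1/2 + (1-Real.cos φ)/α)*r^2)))


lemma integrableA {c : ℝ} (hc : 0 < c) :
    IntegrableOn (fun r : ℝ => r ^ 3 * Real.exp (-(c * r ^ 2))) (Set.Ioi 0) := by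
  have h := integrableOn_rpow_mul_exp_neg_mul_sq hc (s := 3) (by norm_num)
  refine h.congr_fun (fun x hx => ?_) measurableSet_Ioi
  dsimp only
  rw [show ((3:ℝ) : ℝ) = ((3:ℕ) : ℝ) by norm_num, Real.rpow_natCast]
  ring_nf

lemma integralA {c : ℝ} (hc : 0 < c) :
    ∫ r in Set.Ioi (0:ℝ), r ^ 3 * Real.exp (-(c * r ^ 2)) = 1 / (2 * c ^ 2) := by
  have hG : ∀ r ∈ Set.Ici (0:ℝ), HasDerivAt (fun r : ℝ => -((c * r ^ 2 + 1) / (2 * c ^ 2)) * Real.exp (-(c * r ^ 2)))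
      (r ^ 3 * Real.exp (-(c * r ^ 2))) r := by
    intro r _
    have h1 : HasDerivAt (fun r : ℝ => -((c * r ^ 2 + 1) / (2 * c ^ 2))) (-(c * (2 * r) / (2 * c ^ 2))) r := by
      have : HasDerivAt (fun r : ℝ => c * r ^ 2 + 1) (c * (2 * r)) r := by
        simpa using (((hasDerivAt_pow 2 r)).const_mul c).add_const 1
      simpa using ((this.div_const (2 * c ^ 2)).fun_neg)
    have h2 : HasDerivAt (fun r : ℝ => Real.exp (-(c * r ^ 2))) (Real.exp (-(c * r ^ 2)) * (-(c * (2 * r)))) r := by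
      have : HasDerivAt (fun r : ℝ => -(c * r ^ 2)) (-(c * (2 * r))) r := by
        simpa using (((hasDerivAt_pow 2 r)).const_mul c).fun_neg
      exact this.exp
    have := h1.mul h2
    refine this.congr_deriv ?_
    field_simp
    ring
  have htend : Filter.Tendsto (fun r : ℝ => -((c * r ^ 2 + 1) / (2 * c ^ 2)) * Real.exp (-(c * r ^ 2)))
      Filter.atTop (nhds 0) := by
    have key : Filter.Tendsto (fun t : ℝ => -((t + 1) / (2 * c ^ 2)) * Real.exp (-t)) Filter.atTop (nhds 0) := by
      have h1 : Filter.Tendsto (fun t : ℝ => t * Real.exp (-t)) Filter.atTop (nhds 0) := by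
        simpa using Real.tendsto_pow_mul_exp_neg_atTop_nhds_zero 1
      have h2 := Real.tendsto_exp_neg_atTop_nhds_zero
      have := ((h1.add h2).div_const (2 * c ^ 2)).neg
      simp only [zero_add, neg_zero, zero_div] at this
      refine this.congr fun t => ?_
      field_simp
    have hcomp : Filter.Tendsto (fun r : ℝ => c * r ^ 2) Filter.atTop Filter.atTop := by
      exact (Filter.tendsto_atTop_mono (fun r => le_refl _) ((Filter.tendsto_pow_atTop (by norm_num : (2:ℕ) ≠ 0)).const_mul_atTop hc))
    exact key.comp hcomp
  have := integral_Ioi_of_hasDerivAt_of_tendsto' hG (integrableA hc) htend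
  rw [this]
  norm_num

lemma alg1 (α D s c : ℝ) (hα : 0 < α) (hD : 0 < D) (hD2 : D^2 = α^2 + 4*α)
    (hpyth : s^2 + c^2 = 1) (hv : 0 < α+2+D-2*c) (hw : 0 < α+2-2*c) :
    1 + 2 * (1/(1 + (2*s/(α+2+D-2*c))^2) * ((2*c*(α+2+D-2*c) - 2*s*(2*s))/(α+2+D-2*c)^2))
      = D/(α+2-2*c) := by
  have hE : (0:ℝ) < α+2+D := by linarith
  have key1 : (α+2+D-2*c)^2 + (2*s)^2 = 2*(α+2+D)*(α+2-2*c) := by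
    linear_combination hD2 + 4*hpyth
  have h1 : 1 + (2*s/(α+2+D-2*c))^2 = (2*(α+2+D)*(α+2-2*c))/(α+2+D-2*c)^2 := by
    rw [← key1]; field_simp
  rw [h1]
  have h3 : 1/((2*(α+2+D)*(α+2-2*c))/(α+2+D-2*c)^2)
        * ((2*c*(α+2+D-2*c) - 2*s*(2*s))/(α+2+D-2*c)^2)
      = (2*c*(α+2+D-2*c) - 2*s*(2*s))/(2*(α+2+D)*(α+2-2*c)) := by
    rw [one_div_div, div_mul_div_comm, mul_comm ((α+2+D-2*c)^2),
      mul_div_mul_right _ _ (by positivity : ((α+2+D-2*c)^2) ≠ 0)]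
  rw [h3]
  have h5 : 1 + 2 * ((2*c*(α+2+D-2*c) - 2*s*(2*s))/(2*(α+2+D)*(α+2-2*c)))
      = ((α+2+D)*(α+2-2*c) + (2*c*(α+2+D-2*c) - 2*s*(2*s)))/((α+2+D)*(α+2-2*c)) := by
    field_simp
  have h2 : (α+2+D)*(α+2-2*c) + (2*c*(α+2+D-2*c) - 2*s*(2*s)) = (α+2+D)*D := by
    linear_combination -hD2 - 4*hpyth
  rw [h5, h2, mul_div_mul_left _ _ hE.ne']

lemma alg2 (α D s c : ℝ) (hα : 0 < α) (hD : 0 < D) (hD2 : D^2 = α^2 + 4*α)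
    (hpyth : s^2 + c^2 = 1) (hw : 0 < α+2-2*c) :
    α^3/D^2 * (D/(α+2-2*c)/D - (c*(α+2-2*c) - s*(2*s))/(α+2-2*c)^2)
      = α^2*(1-c)/(α+2-2*c)^2 := by
  rw [div_right_comm, div_self hD.ne']
  have h6 : 1/(α+2-2*c) - (c*(α+2-2*c) - s*(2*s))/(α+2-2*c)^2
      = ((α+2-2*c) - (c*(α+2-2*c) - s*(2*s)))/(α+2-2*c)^2 := by
    field_simp
  have h7 : (α+2-2*c) - (c*(α+2-2*c) - s*(2*s)) = (1-c)*(α+4) := by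
    linear_combination 2*hpyth
  rw [h6, h7]
  have h8 : α^3*((1-c)*(α+4))/D^2 = α^2*(1-c) := by
    rw [div_eq_iff (by positivity : (D:ℝ)^2 ≠ 0)]
    linear_combination (α^2*(c-1)) * hD2
  calc α^3/D^2 * ((1-c)*(α+4)/(α+2-2*c)^2)
      = (α^3*((1-c)*(α+4))/D^2)/(α+2-2*c)^2 := by ring
    _ = α^2*(1-c)/(α+2-2*c)^2 := by rw [h8]

lemma hasDerivAtH (α D : ℝ) (hα : 0 < α) (hD : 0 < D) (hD2 : D^2 = α^2 + 4*α) (φ : ℝ) :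
    HasDerivAt (fun φ => α^3/D^2 * ((φ + 2*Real.arctan (2*Real.sin φ/(α+2+D-2*Real.cos φ)))/D
        - Real.sin φ/(α+2-2*Real.cos φ)))
      (α^2*(1-Real.cos φ)/(α+2-2*Real.cos φ)^2) φ := by
  have hc1 := Real.cos_le_one φ
  have hpyth := Real.sin_sq_add_cos_sq φ
  have hv : (0:ℝ) < α + 2 + D - 2*Real.cos φ := by nlinarith
  have hw : (0:ℝ) < α + 2 - 2*Real.cos φ := by nlinarith
  have hsin : HasDerivAt Real.sin (Real.cos φ) φ := Real.hasDerivAt_sin φ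
  have hcos : HasDerivAt Real.cos (-Real.sin φ) φ := Real.hasDerivAt_cos φ
  have hu : HasDerivAt (fun φ => 2*Real.sin φ) (2*Real.cos φ) φ := hsin.const_mul 2
  have hv' : HasDerivAt (fun φ => α+2+D-2*Real.cos φ) (2*Real.sin φ) φ := by
    simpa using ((hcos.const_mul 2).const_sub (α+2+D))
  have hw' : HasDerivAt (fun φ => α+2-2*Real.cos φ) (2*Real.sin φ) φ := by
    simpa using ((hcos.const_mul 2).const_sub (α+2))
  have hg : HasDerivAt (fun φ => 2*Real.sin φ/(α+2+D-2*Real.cos φ))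
      ((2*Real.cos φ*(α+2+D-2*Real.cos φ) - 2*Real.sin φ*(2*Real.sin φ))/(α+2+D-2*Real.cos φ)^2) φ :=
    hu.div hv' hv.ne'
  have hpart1 : HasDerivAt (fun φ => φ + 2*Real.arctan (2*Real.sin φ/(α+2+D-2*Real.cos φ)))
      (D/(α+2-2*Real.cos φ)) φ := by
    have h := (hasDerivAt_id φ).add (hg.arctan.const_mul 2)
    have e := alg1 α D (Real.sin φ) (Real.cos φ) hα hD hD2 hpyth hv hw
    rw [e] at h
    exact h
  have hpart2 : HasDerivAt (fun φ => Real.sin φ/(α+2-2*Real.cos φ))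
      ((Real.cos φ*(α+2-2*Real.cos φ) - Real.sin φ*(2*Real.sin φ))/(α+2-2*Real.cos φ)^2) φ :=
    hsin.div hw' hw.ne'
  have h := ((hpart1.div_const D).sub hpart2).const_mul (α^3/D^2)
  have e := alg2 α D (Real.sin φ) (Real.cos φ) hα hD hD2 hpyth hw
  rw [e] at h
  exact h

lemma integralB (α : ℝ) (hα : 0 < α) :
    ∫ φ in (0:ℝ)..π, α^2*(1-Real.cos φ)/(α+2-2*Real.cos φ)^2
      = π * α^3 / (Real.sqrt (α*(α+4)))^3 := by
  have hD : 0 < Real.sqrt (α*(α+4)) := Real.sqrt_pos.2 (by positivity)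
  have hD2 : (Real.sqrt (α*(α+4)))^2 = α^2 + 4*α := by
    rw [Real.sq_sqrt (by positivity)]; ring
  have hcont : Continuous (fun φ : ℝ => α^2*(1-Real.cos φ)/(α+2-2*Real.cos φ)^2) := by
    apply Continuous.div (by continuity) (by continuity)
    intro x
    have h := Real.cos_le_one x
    have : 0 < α+2-2*Real.cos x := by nlinarith
    positivity
  rw [intervalIntegral.integral_eq_sub_of_hasDerivAt
    (f := fun φ => α^3/(Real.sqrt (α*(α+4)))^2 *
      ((φ + 2*Real.arctan (2*Real.sin φ/(α+2+Real.sqrt (α*(α+4))-2*Real.cos φ)))/(Real.sqrt (α*(α+4)))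
        - Real.sin φ/(α+2-2*Real.cos φ)))
    (fun x _ => hasDerivAtH α _ hα hD hD2 x) (hcont.intervalIntegrable _ _)]
  simp [Real.sin_pi, Real.sin_zero, Real.arctan_zero]
  field_simp

lemma algC (α : ℝ) (hα : 0 < α) :
    (α/(4+α)) ^ ((3:ℝ)/2) = α^3/(Real.sqrt (α*(α+4)))^3 := by
  have h4 : (0:ℝ) < 4 + α := by linarith
  have hx : (0:ℝ) ≤ α/(4+α) := by positivity
  have h1 : ((3:ℝ)/2) = ((1:ℝ)/2)*((3:ℕ):ℝ) := by norm_num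
  rw [h1, Real.rpow_mul hx, Real.rpow_natCast, ← Real.sqrt_eq_rpow,
    Real.sqrt_div hα.le, Real.sqrt_mul hα.le]
  have ha : Real.sqrt α ^ 2 = α := Real.sq_sqrt hα.le
  have hb : Real.sqrt (4+α) ^ 2 = 4 + α := Real.sq_sqrt (by linarith)
  have hb' : Real.sqrt (α+4) = Real.sqrt (4+α) := by ring_nf
  have hsa : 0 < Real.sqrt α := Real.sqrt_pos.2 hα
  have hsb : 0 < Real.sqrt (4+α) := Real.sqrt_pos.2 (by linarith)
  rw [hb', div_pow, mul_pow]
  rw [div_eq_div_iff (by positivity) (by positivity)]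
  linear_combination (Real.sqrt α^4 + α*Real.sqrt α ^2 + α^2) * Real.sqrt (4+α)^3 * ha

lemma besselD (z : ℝ) :
    1 + Real.exp (-z) * (besselI1 z - besselI0 z)
      = (1/π) * ∫ φ in (0:ℝ)..π, (1 + (Real.cos φ - 1) * Real.exp (-(z*(1-Real.cos φ)))) := by
  have hπ := Real.pi_pos
  have hi0 : IntervalIntegrable (fun φ : ℝ => Real.exp (z * Real.cos φ)) volume 0 π :=
    (Real.continuous_exp.comp (continuous_const.mul Real.continuous_cos)).intervalIntegrable _ _
  have hi1 : IntervalIntegrable (fun φ : ℝ => Real.exp (z * Real.cos φ) * Real.cos φ) volume 0 π :=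
    ((Real.continuous_exp.comp (continuous_const.mul Real.continuous_cos)).mul
      Real.continuous_cos).intervalIntegrable _ _
  have hi2 : IntervalIntegrable (fun φ : ℝ => (Real.cos φ - 1) * Real.exp (-(z*(1-Real.cos φ))))
      volume 0 π :=
    ((Real.continuous_cos.sub continuous_const).mul (Real.continuous_exp.comp
      (by continuity))).intervalIntegrable _ _
  have key : (∫ φ in (0:ℝ)..π, (Real.cos φ - 1) * Real.exp (-(z*(1-Real.cos φ))))
      = Real.exp (-z) * ((∫ φ in (0:ℝ)..π, Real.exp (z*Real.cos φ)*Real.cos φ)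
          - ∫ φ in (0:ℝ)..π, Real.exp (z*Real.cos φ)) := by
    rw [← intervalIntegral.integral_sub hi1 hi0, ← intervalIntegral.integral_const_mul]
    apply intervalIntegral.integral_congr
    intro x _
    have h : Real.exp (-z) * Real.exp (z*Real.cos x) = Real.exp (-(z*(1-Real.cos x))) := by
      rw [← Real.exp_add]; ring_nf
    simp only
    linear_combination (1 - Real.cos x) * h
  rw [intervalIntegral.integral_add intervalIntegrable_const hi2, key,
    intervalIntegral.integral_const]
  unfold besselI1 besselI0
  field_simp
  simp

lemma hinner (α : ℝ) (hα : 0 < α) (φ : ℝ) :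
    ∫ r in Set.Ioi (0:ℝ), gfun α r φ
      = 1 - α^2*(1-Real.cos φ)/(α+2-2*Real.cos φ)^2 := by
  have hc1 := Real.cos_le_one φ
  have hq : (0:ℝ) < 1/2 + (1-Real.cos φ)/α :=
    add_pos_of_pos_of_nonneg (by norm_num) (div_nonneg (by linarith) hα.le)
  have hw : (0:ℝ) < α + 2 - 2*Real.cos φ := by nlinarith
  have e : (fun r : ℝ => gfun α r φ)
      = fun r => (1/2)*(r^3*Real.exp (-((1/2:ℝ)*r^2)))
          + ((Real.cos φ-1)/2)*(r^3*Real.exp (-((1/2 + (1-Real.cos φ)/α)*r^2))) := by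
    funext r; unfold gfun; ring
  rw [e, integral_add (((integrableA (by norm_num : (0:ℝ) < 1/2))).const_mul _)
    ((integrableA hq).const_mul _), MeasureTheory.integral_const_mul, MeasureTheory.integral_const_mul,
    integralA (by norm_num : (0:ℝ) < 1/2), integralA hq]
  have hne : α + 2 - 2*Real.cos φ ≠ 0 := hw.ne'
  have hqe : (1:ℝ)/2 + (1-Real.cos φ)/α = (α+2-2*Real.cos φ)/(2*α) := by
    field_simp; ring
  rw [hqe]
  field_simp
  ring

lemma hF (α : ℝ) (hα : 0 < α) (r : ℝ) :
    (r ^ 3 / 2) * Real.exp (-r ^ 2 / 2) *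
        (1 + Real.exp (-r ^ 2 / α) * (besselI1 (r ^ 2 / α) - besselI0 (r ^ 2 / α)))
      = (1/π) * ∫ φ in Set.Ioc (0:ℝ) π, gfun α r φ := by
  rw [neg_div, neg_div, besselD (r^2/α), intervalIntegral.integral_of_le Real.pi_pos.le,
    mul_left_comm]
  congr 1
  rw [← MeasureTheory.integral_const_mul]
  apply setIntegral_congr_fun measurableSet_Ioc
  intro φ _
  have h : Real.exp (-(r^2/2)) * Real.exp (-(r^2/α*(1-Real.cos φ)))
      = Real.exp (-((1/2+(1-Real.cos φ)/α)*r^2)) := by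
    rw [← Real.exp_add]; congr 1; field_simp; ring
  have h2 : Real.exp (-(r^2/2)) = Real.exp (-(1/2*r^2)) := by ring_nf
  unfold gfun
  linear_combination (r^3/2)*h2 + (r^3/2*(Real.cos φ-1))*h


/-- For `α > 0`,
`∫₀^∞ (r³/2) e^{−r²/2} (1 + e^{−r²/α}(I₁(r²/α) − I₀(r²/α))) dr = 1 − (α/(4+α))^{3/2}`. -/
theorem bessel_integral_identity (α : ℝ) (hα : 0 < α) :
    ∫ r in Set.Ioi (0 : ℝ),
        (r ^ 3 / 2) * Real.exp (-r ^ 2 / 2) *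
          (1 + Real.exp (-r ^ 2 / α) * (besselI1 (r ^ 2 / α) - besselI0 (r ^ 2 / α)))
      = 1 - (α / (4 + α)) ^ ((3 : ℝ) / 2) := by
  have hπ := Real.pi_pos
  have hD : 0 < Real.sqrt (α*(α+4)) := Real.sqrt_pos.2 (by positivity)
  have hcontg : Continuous (Function.uncurry (gfun α)) := by
    unfold gfun Function.uncurry; fun_prop
  have h1 : Integrable (fun r : ℝ => (3/2) * (r^3*Real.exp (-(1/2*r^2))))
      (volume.restrict (Set.Ioi (0:ℝ))) := by
    have := (integrableA (by norm_num : (0:ℝ) < 1/2)).const_mul (3/2 : ℝ)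
    simpa using this
  have h2 : Integrable (fun _ : ℝ => (1:ℝ)) (volume.restrict (Set.Ioc (0:ℝ) π)) :=
    integrableOn_const measure_Ioc_lt_top.ne
  have hbound := h1.mul_prod h2
  have hae : ∀ᵐ p : ℝ×ℝ ∂((volume.restrict (Set.Ioi (0:ℝ))).prod
      (volume.restrict (Set.Ioc (0:ℝ) π))),
      ‖Function.uncurry (gfun α) p‖ ≤ (3/2) * (p.1^3*Real.exp (-(1/2*p.1^2))) * 1 := by
    rw [Measure.prod_restrict]
    filter_upwards [ae_restrict_mem (measurableSet_Ioi.prod measurableSet_Ioc)] with p hp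
    obtain ⟨hp1, -⟩ := hp
    have hr : (0:ℝ) < p.1 := hp1
    have hc1 := Real.cos_le_one p.2
    have hcm := Real.neg_one_le_cos p.2
    have hE2 : Real.exp (-((1/2 + (1-Real.cos p.2)/α)*p.1^2)) ≤ Real.exp (-(1/2*p.1^2)) := by
      apply Real.exp_le_exp.2
      have : 0 ≤ (1-Real.cos p.2)/α * p.1^2 :=
        mul_nonneg (div_nonneg (by linarith) hα.le) (sq_nonneg _)
      nlinarith
    have hE2p := Real.exp_pos (-((1/2 + (1-Real.cos p.2)/α)*p.1^2))
    have hE1p := Real.exp_pos (-(1/2*p.1^2))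
    show ‖gfun α p.1 p.2‖ ≤ _
    unfold gfun
    rw [Real.norm_eq_abs, abs_mul, abs_of_nonneg (by positivity : (0:ℝ) ≤ p.1^3/2)]
    have habs : |Real.exp (-(1/2*p.1^2)) + (Real.cos p.2 - 1) *
        Real.exp (-((1/2 + (1-Real.cos p.2)/α)*p.1^2))| ≤ 3 * Real.exp (-(1/2*p.1^2)) := by
      rw [abs_le]
      constructor <;> nlinarith
    calc p.1^3/2 * |Real.exp (-(1/2*p.1^2)) + (Real.cos p.2 - 1) *
            Real.exp (-((1/2 + (1-Real.cos p.2)/α)*p.1^2))|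
        ≤ p.1^3/2 * (3 * Real.exp (-(1/2*p.1^2))) := by
          apply mul_le_mul_of_nonneg_left habs (by positivity)
      _ = (3/2) * (p.1^3*Real.exp (-(1/2*p.1^2))) * 1 := by ring
  have hgint : Integrable (Function.uncurry (gfun α))
      ((volume.restrict (Set.Ioi (0:ℝ))).prod (volume.restrict (Set.Ioc (0:ℝ) π))) :=
    hbound.mono' hcontg.aestronglyMeasurable hae
  have hcont2 : Continuous (fun φ : ℝ => α^2*(1-Real.cos φ)/(α+2-2*Real.cos φ)^2) := by
    apply Continuous.div (by continuity) (by continuity)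
    intro x
    have h := Real.cos_le_one x
    have : 0 < α+2-2*Real.cos x := by nlinarith
    positivity
  have hD3 : (Real.sqrt (α*(α+4)))^3 ≠ 0 := by positivity
  calc ∫ r in Set.Ioi (0 : ℝ),
        (r ^ 3 / 2) * Real.exp (-r ^ 2 / 2) *
          (1 + Real.exp (-r ^ 2 / α) * (besselI1 (r ^ 2 / α) - besselI0 (r ^ 2 / α)))
      = ∫ r in Set.Ioi (0:ℝ), (1/π) * ∫ φ in Set.Ioc (0:ℝ) π, gfun α r φ :=
        integral_congr_ae (Filter.Eventually.of_forall fun r => hF α hα r)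
    _ = (1/π) * ∫ r in Set.Ioi (0:ℝ), ∫ φ in Set.Ioc (0:ℝ) π, gfun α r φ :=
        integral_const_mul _ _
    _ = (1/π) * ∫ φ in Set.Ioc (0:ℝ) π, ∫ r in Set.Ioi (0:ℝ), gfun α r φ := by
        rw [integral_integral_swap hgint]
    _ = (1/π) * ∫ φ in Set.Ioc (0:ℝ) π, (1 - α^2*(1-Real.cos φ)/(α+2-2*Real.cos φ)^2) := by
        congr 1
        exact integral_congr_ae (Filter.Eventually.of_forall fun φ => hinner α hα φ)
    _ = (1/π) * (π - π*α^3/(Real.sqrt (α*(α+4)))^3) := by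
        rw [← intervalIntegral.integral_of_le hπ.le,
          intervalIntegral.integral_sub intervalIntegrable_const
            (hcont2.intervalIntegrable _ _),
          integralB α hα, intervalIntegral.integral_const]
        simp
    _ = 1 - (α / (4 + α)) ^ ((3 : ℝ) / 2) := by
        rw [algC α hα]
        field_simp
end

section
/- For α > 0 and standard 2D polar Gaussian (r, φ) with density (r/(2π)) e^{−r²/2} on [0,∞)×[0,2π), E[r² cos²φ · tanh(r² cos²φ/α)] ≤ 1 − (α/(4+α))^{3/2}. -/
open MeasureTheory Real

private lemma my_continuous_tanh : Continuous Real.tanh := by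
  have h : Real.tanh = fun x => Real.sinh x / Real.cosh x :=
    funext fun x => Real.tanh_eq_sinh_div_cosh x
  rw [h]
  exact Real.continuous_sinh.div Real.continuous_cosh fun x => (Real.cosh_pos x).ne'

private lemma my_abs_tanh_le_one (x : ℝ) : |Real.tanh x| ≤ 1 := by
  rw [Real.tanh_eq_sinh_div_cosh, abs_div, abs_of_pos (Real.cosh_pos x),
    div_le_one (Real.cosh_pos x)]
  nlinarith [Real.cosh_sq_sub_sinh_sq x, sq_abs (Real.sinh x), abs_nonneg (Real.sinh x),
    Real.cosh_pos x]

private lemma my_tanh_le_one_sub_exp {t : ℝ} (ht : 0 ≤ t) :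
    Real.tanh t ≤ 1 - Real.exp (-2*t) := by
  rw [Real.tanh_eq_sinh_div_cosh, div_le_iff₀ (Real.cosh_pos t)]
  rw [Real.sinh_eq, Real.cosh_eq]
  have h1 : Real.exp (-2*t) * Real.exp t = Real.exp (-t) := by
    rw [← Real.exp_add]; ring_nf
  have h2 : Real.exp (-2*t) * Real.exp (-t) = Real.exp (-3*t) := by
    rw [← Real.exp_add]; ring_nf
  have h3 : Real.exp (-3*t) ≤ Real.exp (-t) := Real.exp_le_exp.mpr (by linarith)
  nlinarith [Real.exp_pos t, Real.exp_pos (-t)]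

private lemma my_integral_Ioi_sq_exp {b : ℝ} (hb : 0 < b) :
    ∫ x in Set.Ioi (0:ℝ), x^2 * Real.exp (-b*x^2) = Real.sqrt π / 4 * b ^ (-(3:ℝ)/2) := by
  have h := integral_rpow_mul_exp_neg_mul_rpow (p := 2) (q := 2) (by norm_num) (by norm_num) hb
  rw [show ∫ x in Set.Ioi (0:ℝ), x^2 * Real.exp (-b*x^2)
      = ∫ x in Set.Ioi (0:ℝ), x ^ (2:ℝ) * Real.exp (-b * x ^ (2:ℝ)) from
    setIntegral_congr_fun measurableSet_Ioi (fun x hx => by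
      norm_num [show (2:ℝ) = ((2:ℕ):ℝ) by norm_num, Real.rpow_natCast]), h]
  have hg : Real.Gamma ((2+1)/2) = Real.sqrt π / 2 := by
    rw [show ((2+1)/2 : ℝ) = 1/2 + 1 by norm_num, Real.Gamma_add_one (by norm_num),
      Real.Gamma_one_half_eq]
    ring
  rw [hg]
  norm_num
  ring

private lemma my_integral_sq_exp {b : ℝ} (hb : 0 < b) :
    ∫ x : ℝ, x^2 * Real.exp (-b*x^2) = Real.sqrt π / 2 * b ^ (-(3:ℝ)/2) := by
  have h2 := integral_comp_abs (f := fun t => t^2 * Real.exp (-b*t^2))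
  simp only [sq_abs] at h2
  rw [h2, my_integral_Ioi_sq_exp hb]; ring

private lemma my_integrable_sq_exp {b : ℝ} (hb : 0 < b) :
    Integrable (fun x : ℝ => x^2 * Real.exp (-b*x^2)) := by
  have h := integrable_rpow_mul_exp_neg_mul_sq hb (s := 2) (by norm_num)
  convert h using 2 with x
  norm_num [show (2:ℝ) = ((2:ℕ):ℝ) by norm_num, Real.rpow_natCast]

private lemma my_integrable_pow3_exp :
    IntegrableOn (fun x : ℝ => x^3 * Real.exp (-(1/2)*x^2)) (Set.Ioi 0) := by
  have h := integrableOn_rpow_mul_exp_neg_mul_sq (b := 1/2) (by norm_num) (s := 3) (by norm_num)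
  refine h.congr_fun (fun x hx => ?_) measurableSet_Ioi
  dsimp only
  rw [show (3:ℝ) = ((3:ℕ):ℝ) by norm_num, Real.rpow_natCast]

private lemma my_main_integral (α : ℝ) (hα : 0 < α) :
    ∫ p : ℝ × ℝ, (1/(2*π)) *
      ((p.1^2 * Real.exp (-(1/2)*p.1^2) - p.1^2 * Real.exp (-((1/2)+2/α)*p.1^2)) *
        Real.exp (-(1/2)*p.2^2))
    = 1 - (α / (4 + α)) ^ ((3:ℝ)/2) := by
  set β : ℝ := (1/2) + 2/α with hβdef
  have hβ : 0 < β := by positivity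
  rw [integral_const_mul, MeasureTheory.Measure.volume_eq_prod,
    integral_prod_mul (f := fun x : ℝ => x^2 * Real.exp (-(1/2)*x^2) - x^2 * Real.exp (-β*x^2))
      (g := fun y : ℝ => Real.exp (-(1/2)*y^2)),
    integral_sub (my_integrable_sq_exp (by norm_num)) (my_integrable_sq_exp hβ),
    my_integral_sq_exp (by norm_num : (0:ℝ) < 1/2), my_integral_sq_exp hβ,
    integral_gaussian]
  have h2π : π / (1/2 : ℝ) = 2 * π := by ring
  rw [h2π]
  set A : ℝ := (α / (4 + α)) ^ ((3:ℝ)/2) with hA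
  set t : ℝ := (2:ℝ) ^ ((3:ℝ)/2) with ht
  have hhalf : ((1/2 : ℝ)) ^ (-(3:ℝ)/2) = t := by
    rw [show (-(3:ℝ)/2) = -((3:ℝ)/2) by ring, Real.rpow_neg (by norm_num), one_div,
      Real.inv_rpow (by norm_num), inv_inv]
  have hβval : β ^ (-(3:ℝ)/2) = t * A := by
    have hb1 : β = ((2 * (α/(4+α)))⁻¹ : ℝ) := by
      rw [hβdef]; field_simp; ring
    have hx : (0:ℝ) ≤ α/(4+α) := by positivity
    rw [hb1, show (-(3:ℝ)/2) = -((3:ℝ)/2) by ring, Real.inv_rpow (by positivity),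
      Real.rpow_neg (by positivity), inv_inv, Real.mul_rpow (by norm_num) hx]
  rw [hhalf, hβval]
  have h1 : Real.sqrt (2*π) = Real.sqrt 2 * Real.sqrt π := Real.sqrt_mul (by norm_num) π
  have h2 : Real.sqrt π * Real.sqrt π = π := Real.mul_self_sqrt Real.pi_pos.le
  have h3 : Real.sqrt 2 * t = 4 := by
    rw [ht, Real.sqrt_eq_rpow, ← Real.rpow_add (by norm_num),
      show ((1:ℝ)/2 + 3/2) = ((2:ℕ):ℝ) by norm_num, Real.rpow_natCast]
    norm_num
  have hπ : (π:ℝ) ≠ 0 := Real.pi_ne_zero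
  calc 1/(2*π) * ((Real.sqrt π/2*t - Real.sqrt π/2*(t*A)) * Real.sqrt (2*π))
      = (Real.sqrt π*Real.sqrt π) * (Real.sqrt 2*t) * (1-A) / (4*π) := by rw [h1]; ring
    _ = π * 4 * (1-A)/(4*π) := by rw [h2, h3]
    _ = 1 - A := by field_simp

private lemma my_prod_integrable {F : ℝ × ℝ → ℝ} (hFc : Continuous F)
    (hb : ∀ r φ : ℝ, 0 < r → |F (r, φ)| ≤ r^3 * Real.exp (-(1/2)*r^2) / (2*π))
    {t : Set ℝ} (htm : MeasurableSet t) (htv : volume t < ⊤) :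
    IntegrableOn F (Set.Ioi (0:ℝ) ×ˢ t) := by
  have hD : Integrable (fun r : ℝ => r^3 * Real.exp (-(1/2)*r^2) / (2*π))
      (volume.restrict (Set.Ioi 0)) := my_integrable_pow3_exp.div_const _
  have hB : Integrable (fun z : ℝ × ℝ => (z.1^3 * Real.exp (-(1/2)*z.1^2) / (2*π)) * 1)
      ((volume.restrict (Set.Ioi 0)).prod (volume.restrict t)) :=
    hD.mul_prod ((integrableOn_const_iff (C := (1:ℝ)) (by simp)).mpr (Or.inr htv))
  rw [MeasureTheory.Measure.prod_restrict] at hB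
  rw [IntegrableOn, Measure.volume_eq_prod]
  refine hB.mono' hFc.aestronglyMeasurable.restrict ?_
  rw [ae_restrict_iff' (measurableSet_Ioi.prod htm)]
  filter_upwards with z hz
  obtain ⟨hz1, _⟩ := hz
  have := hb z.1 z.2 hz1
  simpa [Real.norm_eq_abs] using this

/-- For `α > 0` and a standard 2D Gaussian in polar coordinates, with density
`(r/(2π)) e^{−r²/2}` on `[0,∞) × [0,2π)`,
`E[r² cos²φ · tanh(r² cos²φ/α)] ≤ 1 − (α/(4+α))^{3/2}`. -/
theorem polar_gaussian_tanh_expectation (α : ℝ) (hα : 0 < α) :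
    ∫ r in Set.Ioi (0 : ℝ),
        ∫ φ in Set.Ico (0 : ℝ) (2 * π),
          (r / (2 * π)) * Real.exp (-r ^ 2 / 2) *
            (r ^ 2 * Real.cos φ ^ 2 * Real.tanh (r ^ 2 * Real.cos φ ^ 2 / α))
      ≤ 1 - (α / (4 + α)) ^ ((3 : ℝ) / 2) := by
  have hπ : (0:ℝ) < π := Real.pi_pos
  set g : ℝ → ℝ → ℝ := fun r φ =>
    (r / (2 * π)) * Real.exp (-r ^ 2 / 2) *
      (r ^ 2 * Real.cos φ ^ 2 * Real.tanh (r ^ 2 * Real.cos φ ^ 2 / α)) with hg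
  set h : ℝ → ℝ → ℝ := fun r φ =>
    (r / (2 * π)) * Real.exp (-r ^ 2 / 2) *
      (r ^ 2 * Real.cos φ ^ 2 * (1 - Real.exp (-2 * (r ^ 2 * Real.cos φ ^ 2) / α))) with hh
  -- continuity
  have hK : Continuous fun p : ℝ × ℝ => p.1 ^ 2 * Real.cos p.2 ^ 2 := by fun_prop
  have hgc : Continuous fun p : ℝ × ℝ => g p.1 p.2 := by
    apply Continuous.mul
    · fun_prop
    · exact hK.mul (my_continuous_tanh.comp (hK.div_const α))
  have hhc : Continuous fun p : ℝ × ℝ => h p.1 p.2 := by fun_prop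
  -- bounds
  have hgb : ∀ r φ : ℝ, 0 < r → |g r φ| ≤ r^3 * Real.exp (-(1/2)*r^2) / (2*π) := by
    intro r φ hr
    have he : Real.exp (-r^2/2) = Real.exp (-(1/2)*r^2) := by ring_nf
    have hgeq : g r φ = ((r / (2*π)) * Real.exp (-(1/2)*r^2) * (r^2 * Real.cos φ^2)) *
        Real.tanh (r ^ 2 * Real.cos φ ^ 2 / α) := by rw [hg]; simp only []; rw [he]; ring
    rw [hgeq, abs_mul]
    have h1 : |(r / (2*π)) * Real.exp (-(1/2)*r^2) * (r^2 * Real.cos φ^2)|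
        ≤ r^3 * Real.exp (-(1/2)*r^2) / (2*π) := by
      rw [abs_of_nonneg (by positivity)]
      calc (r / (2*π)) * Real.exp (-(1/2)*r^2) * (r^2 * Real.cos φ^2)
          ≤ (r / (2*π)) * Real.exp (-(1/2)*r^2) * (r^2 * 1) := by
            gcongr
            exact Real.cos_sq_le_one φ
        _ = r^3 * Real.exp (-(1/2)*r^2) / (2*π) := by ring
    calc |(r / (2*π)) * Real.exp (-(1/2)*r^2) * (r^2 * Real.cos φ^2)| *
          |Real.tanh (r ^ 2 * Real.cos φ ^ 2 / α)|
        ≤ (r^3 * Real.exp (-(1/2)*r^2) / (2*π)) * 1 :=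
          mul_le_mul h1 (my_abs_tanh_le_one _) (abs_nonneg _) (by positivity)
      _ = r^3 * Real.exp (-(1/2)*r^2) / (2*π) := mul_one _
  have hhb : ∀ r φ : ℝ, 0 < r → |h r φ| ≤ r^3 * Real.exp (-(1/2)*r^2) / (2*π) := by
    intro r φ hr
    have he : Real.exp (-r^2/2) = Real.exp (-(1/2)*r^2) := by ring_nf
    have hheq : h r φ = ((r / (2*π)) * Real.exp (-(1/2)*r^2) * (r^2 * Real.cos φ^2)) *
        (1 - Real.exp (-2 * (r ^ 2 * Real.cos φ ^ 2) / α)) := by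
      rw [hh]; simp only []; rw [he]; ring
    have habs2 : |1 - Real.exp (-2 * (r ^ 2 * Real.cos φ ^ 2) / α)| ≤ 1 := by
      have hle : Real.exp (-2 * (r ^ 2 * Real.cos φ ^ 2) / α) ≤ 1 := by
        rw [← Real.exp_zero]
        apply Real.exp_le_exp.mpr
        have : 0 ≤ r ^ 2 * Real.cos φ ^ 2 := by positivity
        apply div_nonpos_of_nonpos_of_nonneg (by nlinarith) hα.le
      have hpos : 0 < Real.exp (-2 * (r ^ 2 * Real.cos φ ^ 2) / α) := Real.exp_pos _
      rw [abs_le]; constructor <;> nlinarith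
    rw [hheq, abs_mul]
    have h1 : |(r / (2*π)) * Real.exp (-(1/2)*r^2) * (r^2 * Real.cos φ^2)|
        ≤ r^3 * Real.exp (-(1/2)*r^2) / (2*π) := by
      rw [abs_of_nonneg (by positivity)]
      calc (r / (2*π)) * Real.exp (-(1/2)*r^2) * (r^2 * Real.cos φ^2)
          ≤ (r / (2*π)) * Real.exp (-(1/2)*r^2) * (r^2 * 1) := by
            gcongr
            exact Real.cos_sq_le_one φ
        _ = r^3 * Real.exp (-(1/2)*r^2) / (2*π) := by ring
    calc |(r / (2*π)) * Real.exp (-(1/2)*r^2) * (r^2 * Real.cos φ^2)| *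
          |1 - Real.exp (-2 * (r ^ 2 * Real.cos φ ^ 2) / α)|
        ≤ (r^3 * Real.exp (-(1/2)*r^2) / (2*π)) * 1 :=
          mul_le_mul h1 habs2 (abs_nonneg _) (by positivity)
      _ = r^3 * Real.exp (-(1/2)*r^2) / (2*π) := mul_one _
  -- pointwise inequality
  have hgh : ∀ r φ : ℝ, 0 < r → g r φ ≤ h r φ := by
    intro r φ hr
    have hP : (0:ℝ) ≤ (r / (2*π)) * Real.exp (-r^2/2) * (r^2 * Real.cos φ^2) := by positivity
    have ht0 : (0:ℝ) ≤ r ^ 2 * Real.cos φ ^ 2 / α := by positivity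
    have htanh := my_tanh_le_one_sub_exp ht0
    have harg : -2 * (r ^ 2 * Real.cos φ ^ 2) / α = -2 * (r ^ 2 * Real.cos φ ^ 2 / α) := by
      ring
    rw [hg, hh]; simp only []
    rw [harg]
    nlinarith [mul_le_mul_of_nonneg_left htanh hP]
  -- product integrability
  have hPg : IntegrableOn (fun p : ℝ × ℝ => g p.1 p.2)
      (Set.Ioi (0:ℝ) ×ˢ Set.Ico 0 (2*π)) :=
    my_prod_integrable hgc (fun r φ hr => hgb r φ hr) measurableSet_Ico measure_Ico_lt_top
  have hPh : IntegrableOn (fun p : ℝ × ℝ => h p.1 p.2)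
      (Set.Ioi (0:ℝ) ×ˢ Set.Ico 0 (2*π)) :=
    my_prod_integrable hhc (fun r φ hr => hhb r φ hr) measurableSet_Ico measure_Ico_lt_top
  have hPh' : IntegrableOn (fun p : ℝ × ℝ => h p.1 p.2)
      (Set.Ioi (0:ℝ) ×ˢ Set.Ioo (-π) π) :=
    my_prod_integrable hhc (fun r φ hr => hhb r φ hr) measurableSet_Ioo measure_Ioo_lt_top
  -- step 1 : LHS ≤ iterated integral of h
  have step1 : (∫ r in Set.Ioi (0:ℝ), ∫ φ in Set.Ico (0:ℝ) (2*π), g r φ)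
      ≤ ∫ r in Set.Ioi (0:ℝ), ∫ φ in Set.Ico (0:ℝ) (2*π), h r φ := by
    have hGint : Integrable (fun r => ∫ φ in Set.Ico (0:ℝ) (2*π), g r φ)
        (volume.restrict (Set.Ioi 0)) := by
      have := hPg
      rw [IntegrableOn, Measure.volume_eq_prod, ← Measure.prod_restrict] at this
      exact this.integral_prod_left
    have hHint : Integrable (fun r => ∫ φ in Set.Ico (0:ℝ) (2*π), h r φ)
        (volume.restrict (Set.Ioi 0)) := by
      have := hPh
      rw [IntegrableOn, Measure.volume_eq_prod, ← Measure.prod_restrict] at this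
      exact this.integral_prod_left
    refine setIntegral_mono_on hGint hHint measurableSet_Ioi ?_
    intro r hr
    refine setIntegral_mono_on ?_ ?_ measurableSet_Ico (fun φ _ => hgh r φ hr)
    · exact ((hgc.comp (continuous_const.prodMk continuous_id)).integrableOn_Icc).mono_set
        Set.Ico_subset_Icc_self
    · exact ((hhc.comp (continuous_const.prodMk continuous_id)).integrableOn_Icc).mono_set
        Set.Ico_subset_Icc_self
  -- step 2 : shift the angular interval
  have step2 : ∀ r : ℝ, (∫ φ in Set.Ico (0:ℝ) (2*π), h r φ)
      = ∫ φ in Set.Ioo (-π) π, h r φ := by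
    intro r
    have hcont : Continuous (h r) := hhc.comp (continuous_const.prodMk continuous_id)
    have hper : Function.Periodic (h r) (2*π) := by
      intro φ
      rw [hh]; simp only []
      rw [Real.cos_add_two_pi]
    have keyeq := hper.intervalIntegral_add_eq (-π) 0
    rw [show -π + 2*π = π from by ring, zero_add] at keyeq
    rw [MeasureTheory.integral_Ico_eq_integral_Ioo, ← MeasureTheory.integral_Ioc_eq_integral_Ioo,
      ← intervalIntegral.integral_of_le (by positivity), ← keyeq,
      intervalIntegral.integral_of_le (by linarith), MeasureTheory.integral_Ioc_eq_integral_Ioo]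
  -- step 3 : polar coordinates
  have step3 : (∫ r in Set.Ioi (0:ℝ), ∫ φ in Set.Ioo (-π) π, h r φ)
      = 1 - (α / (4 + α)) ^ ((3:ℝ)/2) := by
    set f : ℝ × ℝ → ℝ := fun q => (1/(2*π)) *
      ((q.1^2 * Real.exp (-(1/2)*q.1^2) - q.1^2 * Real.exp (-((1/2)+2/α)*q.1^2)) *
        Real.exp (-(1/2)*q.2^2)) with hf
    have hpolar : ∀ p : ℝ × ℝ, p.1 • f (polarCoord.symm p) = h p.1 p.2 := by
      rintro ⟨r, φ⟩
      simp only [polarCoord_symm_apply, smul_eq_mul, hf, hh]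
      have e1 : Real.exp (-(1/2)*(r*Real.cos φ)^2) * Real.exp (-(1/2)*(r*Real.sin φ)^2)
          = Real.exp (-r^2/2) := by
        rw [← Real.exp_add]
        congr 1
        linear_combination (-(r^2)/2) * (Real.sin_sq_add_cos_sq φ)
      have e2 : Real.exp (-((1/2)+2/α)*(r*Real.cos φ)^2) * Real.exp (-(1/2)*(r*Real.sin φ)^2)
          = Real.exp (-r^2/2) * Real.exp (-2 * (r^2*Real.cos φ^2) / α) := by
        rw [← Real.exp_add, ← Real.exp_add]
        congr 1
        have hs : Real.sin φ ^ 2 = 1 - Real.cos φ ^ 2 := by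
          nlinarith [Real.sin_sq_add_cos_sq φ]
        rw [mul_pow r (Real.sin φ) 2, hs]
        field_simp
        ring
      linear_combination (r*(1/(2*π))*(r*Real.cos φ)^2) * e1
        - (r*(1/(2*π))*(r*Real.cos φ)^2) * e2
    calc (∫ r in Set.Ioi (0:ℝ), ∫ φ in Set.Ioo (-π) π, h r φ)
        = ∫ p in Set.Ioi (0:ℝ) ×ˢ Set.Ioo (-π) π, h p.1 p.2 := by
          rw [Measure.volume_eq_prod] at hPh' ⊢
          exact (MeasureTheory.setIntegral_prod _ hPh').symm
      _ = ∫ p in polarCoord.target, p.1 • f (polarCoord.symm p) := by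
          rw [polarCoord_target]
          exact setIntegral_congr_fun (measurableSet_Ioi.prod measurableSet_Ioo)
            (fun p _ => (hpolar p).symm)
      _ = ∫ p : ℝ × ℝ, f p := integral_comp_polarCoord_symm f
      _ = 1 - (α / (4 + α)) ^ ((3:ℝ)/2) := my_main_integral α hα
  calc (∫ r in Set.Ioi (0:ℝ), ∫ φ in Set.Ico (0:ℝ) (2*π), g r φ)
      ≤ ∫ r in Set.Ioi (0:ℝ), ∫ φ in Set.Ico (0:ℝ) (2*π), h r φ := step1
    _ = ∫ r in Set.Ioi (0:ℝ), ∫ φ in Set.Ioo (-π) π, h r φ := by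
        exact setIntegral_congr_fun measurableSet_Ioi (fun r _ => step2 r)
    _ = 1 - (α / (4 + α)) ^ ((3:ℝ)/2) := step3
end
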